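/- arXiv:2208.13088 — 10 statements merged into one kernel-verified Lean document; each statement's English description precedes it below -/
import Mathlib

section
/- In a distributive category, coproduct injections are monomorphisms. -/
open CategoryTheory CategoryTheory.Limits

universe v u

/-- In a distributive category (finite products and coproducts with the canonical map
`X×Y + X×Z → X×(Y+Z)` invertible), coproduct injections are monomorphisms. -/
theorem coprod_injections_mono_of_distributive {C : Type u} [Category.{v} C]
    [HasFiniteProducts C] [HasFiniteCoproducts C]
    (hdist : ∀ X Y Z : C,
      IsIso (coprod.desc (prod.map (𝟙 X) (coprod.inl : Y ⟶ Y ⨿ Z))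
        (prod.map (𝟙 X) (coprod.inr : Z ⟶ Y ⨿ Z)))) :
    ∀ X Y : C, Mono (coprod.inl : X ⟶ X ⨿ Y) ∧ Mono (coprod.inr : Y ⟶ X ⨿ Y) := by
  intro X Y
  constructor
  · constructor
    intro A f g h
    haveI := hdist A X Y
    have key : prod.lift (𝟙 A) f ≫ (coprod.inl : A ⨯ X ⟶ (A ⨯ X) ⨿ (A ⨯ Y)) =
        prod.lift (𝟙 A) g ≫ coprod.inl := by
      rw [← cancel_mono (coprod.desc (prod.map (𝟙 A) (coprod.inl : X ⟶ X ⨿ Y))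
        (prod.map (𝟙 A) coprod.inr))]
      rw [Category.assoc, Category.assoc, coprod.inl_desc, prod.lift_map, prod.lift_map, h]
    calc f = prod.lift (𝟙 A) f ≫ coprod.inl ≫
            (coprod.desc prod.snd (prod.fst ≫ f) : (A ⨯ X) ⨿ (A ⨯ Y) ⟶ X) := by simp only [coprod.inl_desc, prod.lift_snd]
      _ = prod.lift (𝟙 A) g ≫ coprod.inl ≫ coprod.desc prod.snd (prod.fst ≫ f) := by
          rw [← Category.assoc, key, Category.assoc]
      _ = g := by simp only [coprod.inl_desc, prod.lift_snd]
  · constructor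
    intro A f g h
    haveI := hdist A X Y
    have key : prod.lift (𝟙 A) f ≫ (coprod.inr : A ⨯ Y ⟶ (A ⨯ X) ⨿ (A ⨯ Y)) =
        prod.lift (𝟙 A) g ≫ coprod.inr := by
      rw [← cancel_mono (coprod.desc (prod.map (𝟙 A) (coprod.inl : X ⟶ X ⨿ Y))
        (prod.map (𝟙 A) coprod.inr))]
      rw [Category.assoc, Category.assoc, coprod.inr_desc, prod.lift_map, prod.lift_map, h]
    calc f = prod.lift (𝟙 A) f ≫ coprod.inr ≫
            (coprod.desc (prod.fst ≫ f) prod.snd : (A ⨯ X) ⨿ (A ⨯ Y) ⟶ Y) := by simp only [coprod.inr_desc, prod.lift_snd]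
      _ = prod.lift (𝟙 A) g ≫ coprod.inr ≫ coprod.desc (prod.fst ≫ f) prod.snd := by
          rw [← Category.assoc, key, Category.assoc]
      _ = g := by simp only [coprod.inr_desc, prod.lift_snd]
end

section
/- Let E be a locally cartesian closed category with a strict initial object 0. Every morphism p : E → B factors as p = (¬¬p) ∘ p̄ where p̄ is the canonical map from E into the domain of the double negation ¬¬p. -/
/-!
Maps into `¬p` correspond, under the adjunction `Over.pullback p ⊣ Π_p`, to maps from a
pullback along `p` into `0`, i.e. to objects over `B` that are disjoint from `p`. With a strict
initial object, the counit at `0 ⟶ E` shows that `¬p` is disjoint from `p`; by symmetry `p` is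
disjoint from `¬p`, hence `p` maps over `B` into `¬¬p`.
-/

open CategoryTheory CategoryTheory.Limits

universe v u

/-- A locally cartesian closed category: each pullback functor `Over.pullback p`
has a right adjoint `Π_p`. -/
class LCC (C : Type u) [Category.{v} C] [HasPullbacks C] where
  Pi : ∀ {X Y : C} (p : X ⟶ Y), Over X ⥤ Over Y
  adj : ∀ {X Y : C} (p : X ⟶ Y), Over.pullback p ⊣ Pi p

variable {C : Type u} [Category.{v} C] [HasPullbacks C] [LCC C] [HasInitial C]

/-- The negation `¬p : B∖im p ⟶ B` of `p : E ⟶ B`, i.e. `Π_p (0 ⟶ E)`,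
the right edge of the distributivity pullback around `0 ⟶ E` and `p`. -/
noncomputable def neg {E B : C} (p : E ⟶ B) : Over B :=
  (LCC.Pi p).obj (Over.mk (initial.to E))

/-- The double negation `¬¬p` of `p : E ⟶ B`. -/
noncomputable def nneg {E B : C} (p : E ⟶ B) : Over B := neg (neg p).hom

noncomputable def negLift {E B X : C} (p : E ⟶ B) (q : X ⟶ B) (h : IsInitial (pullback q p)) :
    Over.mk q ⟶ neg p :=
  (LCC.adj p).homEquiv (Over.mk q) (Over.mk (initial.to E))
    (Over.homMk (h.to (⊥_ C)) (h.hom_ext _ _))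

noncomputable def pullbackNegHomIsInitial [HasStrictInitialObjects C] {E B : C} (p : E ⟶ B) :
    IsInitial (pullback (neg p).hom p) :=
  IsInitial.ofStrict ((LCC.adj p).counit.app (Over.mk (initial.to E))).left initialIsInitial

/-- Every morphism `p : E ⟶ B` in a locally cartesian closed category with a strict
initial object factors through the domain of its double negation `¬¬p`. -/
theorem factorization_through_double_negation
    [HasStrictInitialObjects C] {E B : C} (p : E ⟶ B) :
    ∃ pbar : E ⟶ (nneg p).left, pbar ≫ (nneg p).hom = p := by
  let pbar := negLift (neg p).hom p ((pullbackNegHomIsInitial p).ofIso (pullbackSymmetry _ _))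
  exact ⟨pbar.left, Over.w pbar⟩
end

section
/- Let E be a locally cartesian closed category with a strict initial object. For any morphism p : E → B, the canonical factorization map p̄ : E → dom(¬¬p) is dense, i.e. ¬¬(p̄) is an isomorphism (equivalently, ¬(p̄) has initial domain). -/
/-!
A map `g : X ⟶ B` factors through `¬p` exactly when the pullback of `p` along `g` is initial;
this is the adjunction `p^* ⊣ Π_p` together with strictness of the initial object, which also
makes `¬p` a monomorphism. The domain `N` of `¬p̄` pulls `p̄` back to `0`; since `¬¬p` is mono
and `p = p̄ ≫ ¬¬p`, the composite `N ⟶ B` pulls `p` back to `0` as well, so it factors through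
`¬p`. Hence `N` maps into the pullback of `¬p` along `¬¬p`, which is initial, and so `N` is
initial.
-/

open CategoryTheory CategoryTheory.Limits

universe v u

variable {C : Type u} [Category.{v} C] [HasPullbacks C] [LCC C] [HasInitial C]

noncomputable def isInitialPullbackCompMono {𝒞 : Type*} [Category 𝒞]
    [HasStrictInitialObjects 𝒞] {N X Y B : 𝒞} (q : N ⟶ Y) (f : X ⟶ Y) (h : Y ⟶ B) [Mono h]
    (p : X ⟶ B) (hfac : f ≫ h = p) [HasPullback q f] [HasPullback (q ≫ h) p]
    (hq : IsInitial (pullback q f)) : IsInitial (pullback (q ≫ h) p) :=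
  IsInitial.ofStrict
    (pullback.lift (pullback.fst _ _) (pullback.snd _ _) <| by
      rw [← cancel_mono h, Category.assoc, Category.assoc, hfac, pullback.condition])
    hq

lemma exists_lift_neg_of_isInitial_pullback {X E B : C} {p : E ⟶ B} (g : X ⟶ B)
    (hg : IsInitial (pullback g p)) : ∃ r : X ⟶ (neg p).left, r ≫ (neg p).hom = g :=
  let r := (LCC.adj p).homEquiv (Over.mk g) _ (Over.homMk (hg.to _) (hg.hom_ext _ _))
  ⟨r.left, Over.w r⟩

section Negation

variable [HasStrictInitialObjects C]

noncomputable def isInitialPullbackNeg {E B : C} (p : E ⟶ B) :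
    IsInitial (pullback (neg p).hom p) :=
  IsInitial.ofStrict ((LCC.adj p).counit.app (Over.mk (initial.to E))).left initialIsInitial

instance mono_neg_hom {E B : C} (p : E ⟶ B) : Mono (neg p).hom where
  right_cancellation a b hab := by
    let a' : Over.mk (a ≫ (neg p).hom) ⟶ neg p := Over.homMk a
    let b' : Over.mk (a ≫ (neg p).hom) ⟶ neg p := Over.homMk b hab.symm
    -- Their transposes land in `0 ⟶ E`, and maps into a strict initial object agree.
    have : a' = b' := ((LCC.adj p).homEquiv _ _).symm.injective <| by
      ext; exact initial.strict_hom_ext _ _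
    exact congrArg CommaMorphism.left this

end Negation

/-- In a locally cartesian closed category with a strict initial object, the canonical
factorization map `p̄ : E ⟶ dom(¬¬p)` (any map with `p̄ ≫ ¬¬p = p`) is dense:
its negation has initial domain. -/
theorem factorization_map_is_dense
    [HasStrictInitialObjects C] {E B : C} (p : E ⟶ B)
    (pbar : E ⟶ (nneg p).left) (hfac : pbar ≫ (nneg p).hom = p) :
    Nonempty (IsInitial ((neg pbar).left)) := by
  have : Mono (nneg p).hom := mono_neg_hom (neg p).hom
  have hcomp : IsInitial (pullback ((neg pbar).hom ≫ (nneg p).hom) p) :=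
    isInitialPullbackCompMono _ pbar _ p hfac (isInitialPullbackNeg pbar)
  obtain ⟨r, hr⟩ := exists_lift_neg_of_isInitial_pullback _ hcomp
  exact ⟨IsInitial.ofStrict (pullback.lift (neg pbar).hom r hr.symm)
    (isInitialPullbackNeg (neg p).hom)⟩
end

section
/- Let E be a locally cartesian closed category with a strict initial object. The classes of dense morphisms and closed morphisms form an orthogonal factorization system on E: every map factors uniquely (up to unique isomorphism) as a dense map followed by a closed map, and both classes are closed under composition and contain the isomorphisms. -/
open CategoryTheory CategoryTheory.Limits

universe v u

variable {C : Type u} [Category.{v} C] [HasPullbacks C] [LCC C] [HasInitial C]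

/-- `f` is dense when `¬¬f ≅ id_B` in the slice over `B`. -/
def IsDense {A B : C} (f : A ⟶ B) : Prop := Nonempty (nneg f ≅ Over.mk (𝟙 B))

/-- `f` is closed when `¬¬f ≅ f` in the slice over `B`. -/
def IsClosedMor {A B : C} (f : A ⟶ B) : Prop := Nonempty (nneg f ≅ Over.mk f)

section Aux

/-- negation of an over-object -/
noncomputable abbrev Neg' {B : C} (x : Over B) : Over B := neg x.hom

variable [HasStrictInitialObjects C]

lemma bot_hom_subsingleton {X : C} : Subsingleton (X ⟶ ⊥_ C) := by
  constructor
  intro f g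
  have h : IsInitial X := IsInitial.ofIso initialIsInitial (asIso f).symm
  exact h.hom_ext f g

lemma initial_hom_ext {X Y : C} (h : X ⟶ ⊥_ C) (a b : X ⟶ Y) : a = b := by
  have hX : IsInitial X := IsInitial.ofIso initialIsInitial (asIso h).symm
  exact hX.hom_ext a b

/-- from a disjointness witness, a morphism into the negation -/
noncomputable def homOfDisj {B : C} {g x : Over B} (h : pullback g.hom x.hom ⟶ ⊥_ C) :
    g ⟶ Neg' x :=
  ((LCC.adj x.hom).homEquiv g (Over.mk (initial.to x.left)))
    (Over.homMk h (initial_hom_ext h _ _))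

/-- from a morphism into the negation, a disjointness witness -/
noncomputable def disjOfHom {B : C} {g x : Over B} (k : g ⟶ Neg' x) :
    pullback g.hom x.hom ⟶ ⊥_ C :=
  (((LCC.adj x.hom).homEquiv g (Over.mk (initial.to x.left))).symm k).left

instance hom_neg_subsingleton {B : C} {g x : Over B} : Subsingleton (g ⟶ Neg' x) := by
  constructor
  intro a b
  have := ((LCC.adj x.hom).homEquiv g (Over.mk (initial.to x.left))).symm.injective
  apply this
  apply Over.OverMorphism.ext
  exact bot_hom_subsingleton.elim _ _

lemma neg_hom_mono {B : C} (x : Over B) : Mono (Neg' x).hom := by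
  constructor
  intro Z a b h
  let ga : Over.mk (a ≫ (Neg' x).hom) ⟶ Neg' x := Over.homMk a rfl
  let gb : Over.mk (a ≫ (Neg' x).hom) ⟶ Neg' x := Over.homMk b h.symm
  have : ga = gb := Subsingleton.elim _ _
  have := congrArg CommaMorphism.left this
  simpa [ga, gb] using this

/-- counit disjointness: `¬x` is disjoint from `x`. -/
noncomputable def negDisj {B : C} (x : Over B) : pullback (Neg' x).hom x.hom ⟶ ⊥_ C :=
  disjOfHom (𝟙 (Neg' x))

/-- the unit `x ⟶ ¬¬x`. -/
noncomputable def unitHom {B : C} (x : Over B) : x ⟶ Neg' (Neg' x) :=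
  homOfDisj ((pullbackSymmetry _ _).hom ≫ negDisj x)

/-- `Neg'` is antitone. -/
noncomputable def negMap {B : C} {x y : Over B} (k : x ⟶ y) : Neg' y ⟶ Neg' x :=
  homOfDisj (pullback.map (Neg' y).hom x.hom (Neg' y).hom y.hom (𝟙 _) k.left (𝟙 _)
      (by simp) (by simp [Over.w k]) ≫ negDisj y)

/-- two opposing maps between negations give an isomorphism. -/
noncomputable def negIsoOfHoms {B : C} {a b : Over B} (f : Neg' a ⟶ Neg' b)
    (g : Neg' b ⟶ Neg' a) : Neg' a ≅ Neg' b where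
  hom := f
  inv := g
  hom_inv_id := Subsingleton.elim _ _
  inv_hom_id := Subsingleton.elim _ _

noncomputable def tripleNegIso {B : C} (x : Over B) : Neg' (Neg' (Neg' x)) ≅ Neg' x :=
  negIsoOfHoms (a := Neg' (Neg' x)) (b := x) (negMap (unitHom x)) (unitHom (Neg' x))

lemma hom_sub_of_mono {B : C} {x y : Over B} (h : Mono y.hom) : Subsingleton (x ⟶ y) := by
  constructor
  intro a b
  apply Over.OverMorphism.ext
  rw [← cancel_mono y.hom, Over.w a, Over.w b]

lemma isDense_of_bot {A B : C} (f : A ⟶ B) (h : (neg f).left ⟶ ⊥_ C) : IsDense f := by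
  refine ⟨?_⟩
  have hto : nneg f ⟶ Over.mk (𝟙 B) := Over.homMk (nneg f).hom (by simp)
  have hfrom : Over.mk (𝟙 B) ⟶ Neg' (neg f) :=
    homOfDisj (pullback.snd (𝟙 B) (neg f).hom ≫ h)
  exact
    { hom := hto
      inv := hfrom
      hom_inv_id := (hom_neg_subsingleton (g := nneg f) (x := neg f)).elim _ _
      inv_hom_id := (hom_sub_of_mono (x := Over.mk (𝟙 B)) (y := Over.mk (𝟙 B))
        (by simpa using inferInstanceAs (Mono (𝟙 B)))).elim _ _ }

lemma bot_of_isDense {A B : C} {f : A ⟶ B} (h : IsDense f) :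
    Nonempty ((neg f).left ⟶ ⊥_ C) := by
  obtain ⟨i⟩ := h
  have k : Over.mk (𝟙 B) ⟶ Neg' (neg f) := i.inv
  have d : pullback (𝟙 B) (neg f).hom ⟶ ⊥_ C := disjOfHom k
  exact ⟨pullback.lift (neg f).hom (𝟙 _) (by simp) ≫ d⟩

lemma dense_disj {A B : C} {f : A ⟶ B} (hf : IsDense f) (g : Over B)
    (h : pullback g.hom f ⟶ ⊥_ C) : Nonempty (g.left ⟶ ⊥_ C) := by
  have k : g ⟶ Neg' (Over.mk f) := homOfDisj (x := Over.mk f) h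
  obtain ⟨b⟩ := bot_of_isDense hf
  exact ⟨k.left ≫ b⟩

lemma mono_of_isClosed {A B : C} {f : A ⟶ B} (h : IsClosedMor f) : Mono f := by
  obtain ⟨i⟩ := h
  have w : i.inv.left ≫ (nneg f).hom = f := Over.w i.inv
  have : IsIso i.inv.left := by
    refine ⟨i.hom.left, ?_, ?_⟩
    · have := congrArg CommaMorphism.left i.inv_hom_id
      simpa using this
    · have := congrArg CommaMorphism.left i.hom_inv_id
      simpa using this
  rw [← w]
  have : Mono (nneg f).hom := neg_hom_mono (neg f)
  exact mono_comp _ _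

noncomputable def pb_comp_mono_bot {X Y B D : C} {a : X ⟶ B} {b : Y ⟶ B} (g : B ⟶ D) [Mono g]
    (h : pullback a b ⟶ ⊥_ C) : pullback (a ≫ g) (b ≫ g) ⟶ ⊥_ C :=
  pullback.lift (pullback.fst _ _) (pullback.snd _ _)
    (by rw [← cancel_mono g]; simpa using pullback.condition) ≫ h

noncomputable def bot_of_graph {X Q B : C} {a : X ⟶ B} {q : Q ⟶ B} (φ : X ⟶ Q) (w : φ ≫ q = a)
    (h : pullback a q ⟶ ⊥_ C) : X ⟶ ⊥_ C :=
  pullback.lift (𝟙 X) φ (by simp [w]) ≫ h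

end Aux

section Main
variable [HasStrictInitialObjects C]

lemma part_fact {A B : C} (f : A ⟶ B) :
    ∃ (M : C) (l : A ⟶ M) (r : M ⟶ B), IsDense l ∧ IsClosedMor r ∧ l ≫ r = f := by
  let u : Over.mk f ⟶ Neg' (neg f) := unitHom (Over.mk f)
  refine ⟨(nneg f).left, u.left, (nneg f).hom, ?_, ⟨tripleNegIso (neg f)⟩, Over.w u⟩
  set l := u.left with hl
  set r := (nneg f).hom with hr
  have c1 : pullback (neg l).hom l ⟶ ⊥_ C := negDisj (Over.mk l)
  haveI : Mono r := neg_hom_mono (neg f)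
  have c2 : pullback ((neg l).hom ≫ r) (l ≫ r) ⟶ ⊥_ C := pb_comp_mono_bot r c1
  have hw : l ≫ r = f := Over.w u
  have c2' : pullback ((neg l).hom ≫ r) f ⟶ ⊥_ C :=
    (pullback.congrHom rfl hw.symm).hom ≫ c2
  have c3 : pullback r (neg f).hom ⟶ ⊥_ C := negDisj (neg f)
  have c4 : pullback ((neg l).hom ≫ r) (neg f).hom ⟶ ⊥_ C :=
    pullback.map _ _ r (neg f).hom (neg l).hom (𝟙 _) (𝟙 _) (by simp; rfl) (by simp) ≫ c3
  have ζ : Over.mk ((neg l).hom ≫ r) ⟶ Neg' (Over.mk f) := homOfDisj (x := Over.mk f) c2'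
  exact isDense_of_bot l (bot_of_graph ζ.left (Over.w ζ) c4)

lemma part_dense_comp {A B D : C} (f : A ⟶ B) (g : B ⟶ D) (hf : IsDense f) (hg : IsDense g) :
    IsDense (f ≫ g) := by
  set ρ := (neg (f ≫ g)).hom with hρ
  have c : pullback ρ (f ≫ g) ⟶ ⊥_ C := negDisj (Over.mk (f ≫ g))
  have mp : pullback (pullback.snd ρ g) f ⟶ pullback ρ (f ≫ g) :=
    pullback.lift (pullback.fst _ _ ≫ pullback.fst ρ g) (pullback.snd _ _) (by
      rw [Category.assoc, pullback.condition, ← Category.assoc, pullback.condition,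
        Category.assoc])
  obtain ⟨hP⟩ := dense_disj hf (Over.mk (pullback.snd ρ g)) (mp ≫ c)
  obtain ⟨hR⟩ := dense_disj hg (neg (f ≫ g)) hP
  exact isDense_of_bot _ hR

lemma part_closed_comp {A B D : C} (f : A ⟶ B) (g : B ⟶ D)
    (hf : IsClosedMor f) (hg : IsClosedMor g) : IsClosedMor (f ≫ g) := by
  obtain ⟨iF⟩ := hf
  obtain ⟨iG⟩ := hg
  haveI mf : Mono f := mono_of_isClosed ⟨iF⟩
  haveI mg : Mono g := mono_of_isClosed ⟨iG⟩
  have d0 : pullback (neg g).hom (f ≫ g) ⟶ ⊥_ C :=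
    pullback.map _ _ (neg g).hom g (𝟙 _) f (𝟙 _) (by simp) (by simp) ≫ negDisj (Over.mk g)
  have θ : neg g ⟶ Neg' (Over.mk (f ≫ g)) := homOfDisj (x := Over.mk (f ≫ g)) d0
  have d1 : pullback (nneg (f ≫ g)).hom (neg g).hom ⟶ ⊥_ C :=
    pullback.map _ _ (nneg (f ≫ g)).hom (neg (f ≫ g)).hom (𝟙 _) θ.left (𝟙 _)
      (by simp) (by rw [Category.comp_id]; exact (Over.w θ).symm) ≫ negDisj (neg (f ≫ g))
  have φ0 : nneg (f ≫ g) ⟶ Neg' (neg g) := homOfDisj (x := neg g) d1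
  have φ : nneg (f ≫ g) ⟶ Over.mk g := φ0 ≫ iG.hom
  have wφ : φ.left ≫ g = (nneg (f ≫ g)).hom := Over.w φ
  have d2 : pullback ((neg f).hom ≫ g) (f ≫ g) ⟶ ⊥_ C :=
    pb_comp_mono_bot g (negDisj (Over.mk f))
  have χ0 : Over.mk ((neg f).hom ≫ g) ⟶ Neg' (Over.mk (f ≫ g)) :=
    homOfDisj (x := Over.mk (f ≫ g)) d2
  have χ1 : Over.mk ((neg f).hom ≫ g) ⟶ Neg' (nneg (f ≫ g)) :=
    χ0 ≫ (tripleNegIso (Over.mk (f ≫ g))).inv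
  have d3 : pullback ((neg f).hom ≫ g) (nneg (f ≫ g)).hom ⟶ ⊥_ C := disjOfHom χ1
  have d3' : pullback ((nneg (f ≫ g)).hom) ((neg f).hom ≫ g) ⟶ ⊥_ C :=
    (pullbackSymmetry _ _).hom ≫ d3
  have d4 : pullback (φ.left ≫ g) ((neg f).hom ≫ g) ⟶ ⊥_ C :=
    (pullback.congrHom wφ rfl).hom ≫ d3'
  have d5 : pullback φ.left (neg f).hom ⟶ ⊥_ C :=
    pullback.map _ _ _ _ (𝟙 _) (𝟙 _) g (by simp) (by simp) ≫ d4
  have χ : Over.mk φ.left ⟶ Neg' (neg f) := homOfDisj (x := neg f) d5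
  have χ' : Over.mk φ.left ⟶ Over.mk f := χ ≫ iF.hom
  have wχ : χ'.left ≫ f = φ.left := Over.w χ'
  have ψ : nneg (f ≫ g) ⟶ Over.mk (f ≫ g) :=
    Over.homMk χ'.left (by
      show χ'.left ≫ (f ≫ g) = (nneg (f ≫ g)).hom
      rw [← Category.assoc, wχ, wφ])
  haveI : Mono (f ≫ g) := mono_comp f g
  exact ⟨{
    hom := ψ
    inv := unitHom (Over.mk (f ≫ g))
    hom_inv_id := (hom_neg_subsingleton (g := nneg (f ≫ g)) (x := neg (f ≫ g))).elim _ _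
    inv_hom_id := (hom_sub_of_mono (x := Over.mk (f ≫ g)) (y := Over.mk (f ≫ g))
      (by simpa using this)).elim _ _ }⟩

lemma part_iso {A B : C} (f : A ⟶ B) (hf : IsIso f) : IsDense f ∧ IsClosedMor f := by
  haveI := hf
  constructor
  · have c : pullback (neg f).hom f ⟶ ⊥_ C := negDisj (Over.mk f)
    exact isDense_of_bot f
      (pullback.lift (𝟙 _) ((neg f).hom ≫ inv f) (by simp) ≫ c)
  · haveI : Mono f := inferInstance
    exact ⟨{
      hom := Over.homMk ((nneg f).hom ≫ inv f) (by simp)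
      inv := unitHom (Over.mk f)
      hom_inv_id := (hom_neg_subsingleton (g := nneg f) (x := neg f)).elim _ _
      inv_hom_id := (hom_sub_of_mono (x := Over.mk f) (y := Over.mk f)
        (by simpa using this)).elim _ _ }⟩

lemma key_hom {A B M M' : C} (f : A ⟶ B) (l : A ⟶ M) (r : M ⟶ B) (l' : A ⟶ M') (r' : M' ⟶ B)
    (hl : IsDense l) (hlr : l ≫ r = f) (hr' : IsClosedMor r') (hlr' : l' ≫ r' = f) :
    Nonempty (Over.mk r ⟶ Over.mk r') := by
  obtain ⟨iR'⟩ := hr'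
  have dcounit : pullback (nneg r').hom (neg r').hom ⟶ ⊥_ C := negDisj (neg r')
  have d : pullback r' (neg r').hom ⟶ ⊥_ C :=
    pullback.map _ _ _ _ iR'.inv.left (𝟙 _) (𝟙 _) (by simp [Over.w iR'.inv]) (by simp) ≫ dcounit
  have dA : pullback f (neg r').hom ⟶ ⊥_ C := by
    rw [← hlr']
    exact pullback.map _ _ _ _ l' (𝟙 _) (𝟙 _) (by simp) (by simp) ≫ d
  rw [← hlr] at dA
  have mp : pullback (pullback.fst r (neg r').hom) l ⟶ pullback (l ≫ r) (neg r').hom :=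
    pullback.lift (pullback.snd _ _) (pullback.fst _ _ ≫ pullback.snd r (neg r').hom) (by
      rw [← Category.assoc, ← pullback.condition, Category.assoc, Category.assoc,
        pullback.condition])
  obtain ⟨hT⟩ := dense_disj hl (Over.mk (pullback.fst r (neg r').hom)) (mp ≫ dA)
  have β0 : Over.mk r ⟶ Neg' (neg r') := homOfDisj (x := neg r') hT
  exact ⟨β0 ≫ iR'.hom⟩

lemma part_unique {A B M M' : C} (f : A ⟶ B) (l : A ⟶ M) (r : M ⟶ B) (l' : A ⟶ M') (r' : M' ⟶ B)
    (hl : IsDense l) (hr : IsClosedMor r) (hlr : l ≫ r = f)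
    (hl' : IsDense l') (hr' : IsClosedMor r') (hlr' : l' ≫ r' = f) :
    ∃! α : M ≅ M', l ≫ α.hom = l' ∧ α.hom ≫ r' = r := by
  haveI mr : Mono r := mono_of_isClosed hr
  haveI mr' : Mono r' := mono_of_isClosed hr'
  obtain ⟨β⟩ := key_hom f l r l' r' hl hlr hr' hlr'
  obtain ⟨γ⟩ := key_hom f l' r' l r hl' hlr' hr hlr
  have wβ : β.left ≫ r' = r := Over.w β
  have wγ : γ.left ≫ r = r' := Over.w γ
  have h1 : β.left ≫ γ.left = 𝟙 M := by
    rw [← cancel_mono r, Category.assoc, wγ, wβ]; simp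
  have h2 : γ.left ≫ β.left = 𝟙 M' := by
    rw [← cancel_mono r', Category.assoc, wβ, wγ]; simp
  refine ⟨⟨β.left, γ.left, h1, h2⟩, ⟨?_, wβ⟩, ?_⟩
  · rw [← cancel_mono r', Category.assoc, wβ, hlr, hlr']
  · intro y hy
    apply Iso.ext
    rw [← cancel_mono r', hy.2, wβ]

end Main

/-- In a locally cartesian closed category with a strict initial object, the dense and
closed morphisms form an orthogonal factorization system: every map factors as a dense
map followed by a closed map, uniquely up to unique compatible isomorphism, and both
classes are closed under composition and contain all isomorphisms. -/
theorem dense_closed_orthogonal_factorization_system [HasStrictInitialObjects C] :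
    (∀ {A B : C} (f : A ⟶ B),
      ∃ (M : C) (l : A ⟶ M) (r : M ⟶ B), IsDense l ∧ IsClosedMor r ∧ l ≫ r = f) ∧
    (∀ {A B M M' : C} (f : A ⟶ B) (l : A ⟶ M) (r : M ⟶ B) (l' : A ⟶ M') (r' : M' ⟶ B),
      IsDense l → IsClosedMor r → l ≫ r = f → IsDense l' → IsClosedMor r' → l' ≫ r' = f →
      ∃! α : M ≅ M', l ≫ α.hom = l' ∧ α.hom ≫ r' = r) ∧
    (∀ {A B D : C} (f : A ⟶ B) (g : B ⟶ D), IsDense f → IsDense g → IsDense (f ≫ g)) ∧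
    (∀ {A B D : C} (f : A ⟶ B) (g : B ⟶ D), IsClosedMor f → IsClosedMor g → IsClosedMor (f ≫ g)) ∧
    (∀ {A B : C} (f : A ⟶ B), IsIso f → IsDense f ∧ IsClosedMor f) := by
  refine ⟨fun {A B} f => part_fact f,
    fun {A B M M'} f l r l' r' hl hr hlr hl' hr' hlr' =>
      part_unique f l r l' r' hl hr hlr hl' hr' hlr',
    fun {A B D} f g hf hg => part_dense_comp f g hf hg,
    fun {A B D} f g hf hg => part_closed_comp f g hf hg,
    fun {A B} f hf => part_iso f hf⟩
end

section
/- Let E be a locally cartesian closed category with a strict initial object. Dense morphisms are stable under pullback: if d is dense and d' is a pullback of d along any morphism, then d' is dense. -/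
open CategoryTheory CategoryTheory.Limits

universe v u

variable {C : Type u} [Category.{v} C] [HasPullbacks C] [LCC C] [HasInitial C]

section Aux

variable {A B Y P : C} {d : A ⟶ B} {g : Y ⟶ B} {k : P ⟶ A} {d' : P ⟶ Y}

/-- The pasting iso (Beck–Chevalley for Σ/Δ): for a pullback square,
`Σ_k ∘ Δ_{d'} ≅ Δ_d ∘ Σ_g`. -/
noncomputable def pasteIso (hpb : IsPullback k d' d g) :
    Over.pullback d' ⋙ Over.map k ≅ Over.map g ⋙ Over.pullback d := by
  refine NatIso.ofComponents (fun y => Over.isoMk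
    (((IsPullback.of_hasPullback y.hom d').flip.paste_horiz hpb).flip.isoPullback) ?_) ?_
  · simp
  · intro y z u
    ext
    dsimp
    apply pullback.hom_ext <;> simp
    · erw [pullback.lift_fst (f := z.hom ≫ g) (g := d)]
      simp
      erw [pullback.lift_fst]
    · erw [pullback.lift_snd (f := z.hom ≫ g) (g := d)]
      simp
      erw [pullback.lift_snd_assoc]

variable [HasStrictInitialObjects C]

/-- Pulling back an initial object gives an initial object (strict initial). -/
noncomputable def pullbackInitialIso (k : P ⟶ A) :
    (Over.pullback k).obj (Over.mk (initial.to A)) ≅ Over.mk (initial.to P) := by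
  have hinit : IsInitial (pullback (initial.to A) k) :=
    IsInitial.ofIso initialIsInitial (asIso (pullback.fst (initial.to A) k)).symm
  exact Over.isoMk (asIso (pullback.fst (initial.to A) k)) (hinit.hom_ext _ _)

/-- Beck–Chevalley for negation: `Δ_g (¬d) ≅ ¬d'`. -/
noncomputable def negPullbackIso (hpb : IsPullback k d' d g) :
    (Over.pullback g).obj (neg d) ≅ neg d' :=
  ((conjugateIsoEquiv ((Over.mapPullbackAdj g).comp (LCC.adj d))
      ((LCC.adj d').comp (Over.mapPullbackAdj k)) (pasteIso hpb)).app
        (Over.mk (initial.to A))) ≪≫ (LCC.Pi d').mapIso (pullbackInitialIso k)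

end Aux

/-- In a locally cartesian closed category with a strict initial object, dense morphisms
are stable under pullback. -/
theorem dense_stable_under_pullback [HasStrictInitialObjects C]
    {A B Y P : C} (d : A ⟶ B) (g : Y ⟶ B) (k : P ⟶ A) (d' : P ⟶ Y)
    (hpb : IsPullback k d' d g) (hd : IsDense d) : IsDense d' := by
  obtain ⟨i⟩ := hd
  have ψ : neg d' ≅ (Over.pullback g).obj (neg d) := (negPullbackIso hpb).symm
  have hpb2 : IsPullback (ψ.hom.left ≫ pullback.fst (neg d).hom g)
      (neg d').hom (neg d).hom g := by
    refine IsPullback.of_iso_pullback ⟨?_⟩ ((Over.forget Y).mapIso ψ) rfl (Over.w ψ.hom)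
    rw [Category.assoc, pullback.condition, ← Category.assoc,
      show ψ.hom.left ≫ pullback.snd (neg d).hom g = (neg d').hom from Over.w ψ.hom]
  have hid : (Over.pullback g).obj (Over.mk (𝟙 B)) ≅ Over.mk (𝟙 Y) := by
    have h : IsPullback g (𝟙 Y) (𝟙 B) g :=
      (IsPullback.of_horiz_isIso ⟨by simp⟩).flip
    exact Over.isoMk h.isoPullback.symm (by simpa using h.isoPullback_inv_snd)
  exact ⟨(negPullbackIso hpb2).symm ≪≫ (Over.pullback g).mapIso i ≪≫ hid⟩
end

section
/- Let E be a locally cartesian closed category with a strict initial object. For monomorphisms A → X and B → X, writing Ā for ¬¬A as a subobject of X, the double-negation closure satisfies Ā ∩ B̄ ≅ (A ∩ B)‾ as subobjects of X. -/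
open CategoryTheory CategoryTheory.Limits

universe v u

variable {C : Type u} [Category.{v} C] [HasPullbacks C] [LCC C] [HasInitial C]

/-- Negation of an over-object. -/
noncomputable def negO {X : C} (S : Over X) : Over X := neg S.hom

/-- Meet of two over-objects via pullback. -/
noncomputable def meetO {X : C} (S T : Over X) : Over X :=
  Over.mk (pullback.fst S.hom T.hom ≫ S.hom)

/-- Disjointness of two over-objects. -/
def Disj {X : C} (S T : Over X) : Prop :=
  Nonempty ((pullback S.hom T.hom : C) ⟶ ⊥_ C)

section lemmas
set_option linter.unusedSectionVars false
variable [HasStrictInitialObjects C] {X : C}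

theorem disj_symm {S T : Over X} (h : Disj S T) : Disj T S := by
  obtain ⟨f⟩ := h
  exact ⟨pullback.lift (pullback.snd _ _) (pullback.fst _ _) pullback.condition.symm ≫ f⟩

noncomputable def meetFst (S T : Over X) : meetO S T ⟶ S :=
  Over.homMk (pullback.fst S.hom T.hom) rfl

noncomputable def meetSnd (S T : Over X) : meetO S T ⟶ T :=
  Over.homMk (pullback.snd S.hom T.hom) pullback.condition.symm

noncomputable def meetLift {V S T : Over X} (f : V ⟶ S) (g : V ⟶ T) : V ⟶ meetO S T :=
  Over.homMk (pullback.lift f.left g.left (by rw [Over.w, Over.w]))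
    (by simp [meetO]; rw [← Category.assoc, pullback.lift_fst, Over.w])

theorem disj_of_le {S S' T : Over X} (f : S ⟶ S') (h : Disj S' T) : Disj S T := by
  obtain ⟨q⟩ := h
  exact ⟨pullback.lift (pullback.fst _ _ ≫ f.left) (pullback.snd _ _)
    (by rw [Category.assoc, Over.w, pullback.condition]) ≫ q⟩

theorem disj_of_le' {S T T' : Over X} (f : T ⟶ T') (h : Disj S T') : Disj S T :=
  disj_symm (disj_of_le f (disj_symm h))

/-- adjunction, one direction -/
theorem hom_neg_of_disj {S T : Over X} (h : Disj S T) : Nonempty (T ⟶ negO S) := by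
  obtain ⟨q⟩ := h
  -- (Over.pullback S.hom).obj T has left = pullback T.hom S.hom
  let ℓ : ((Over.pullback S.hom).obj T).left ⟶ ⊥_ C :=
    (pullback.lift (pullback.snd _ _) (pullback.fst _ _) pullback.condition.symm :
      pullback T.hom S.hom ⟶ pullback S.hom T.hom) ≫ q
  have hInit : IsInitial ((Over.pullback S.hom).obj T).left :=
    IsInitial.ofStrict ℓ initialIsInitial
  exact ⟨((LCC.adj S.hom).homEquiv T (Over.mk (initial.to S.left)))
    (Over.homMk ℓ (hInit.hom_ext _ _))⟩

theorem disj_of_hom_neg {S T : Over X} (h : Nonempty (T ⟶ negO S)) : Disj S T := by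
  obtain ⟨f⟩ := h
  let k := ((LCC.adj S.hom).homEquiv T (Over.mk (initial.to S.left))).symm f
  exact ⟨pullback.lift (pullback.snd _ _) (pullback.fst _ _) pullback.condition.symm ≫ k.left⟩

theorem disj_self_neg (S : Over X) : Disj S (negO S) :=
  disj_of_hom_neg ⟨𝟙 _⟩

/-- negation is antitone -/
theorem negAntitone {S S' : Over X} (f : S ⟶ S') : Nonempty (negO S' ⟶ negO S) :=
  hom_neg_of_disj (disj_of_le f (disj_self_neg S'))

instance neg_hom_mono_s10 {E : C} (p : E ⟶ X) : Mono (neg p).hom := by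
  constructor
  intro T u v huv
  let U : Over X := Over.mk (u ≫ (neg p).hom)
  let fu : U ⟶ neg p := Over.homMk u rfl
  let fv : U ⟶ neg p := Over.homMk v huv.symm
  have key : fu = fv := by
    have := ((LCC.adj p).homEquiv U (Over.mk (initial.to E))).symm.injective
    apply ((LCC.adj p).homEquiv U (Over.mk (initial.to E))).symm.injective
    set gu := ((LCC.adj p).homEquiv U (Over.mk (initial.to E))).symm fu
    set gv := ((LCC.adj p).homEquiv U (Over.mk (initial.to E))).symm fv
    have hInit : IsInitial ((Over.pullback p).obj U).left :=
      IsInitial.ofStrict gu.left initialIsInitial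
    ext
    exact hInit.hom_ext _ _
  have : fu.left = fv.left := by rw [key]
  exact this

theorem meet_hom_mono {S T : Over X} [Mono S.hom] [Mono T.hom] : Mono (meetO S T).hom := by
  have : Mono (pullback.fst S.hom T.hom) := by
    exact pullback.fst_of_mono
  exact mono_comp (pullback.fst S.hom T.hom) S.hom

/-- two objects over X with mono structure maps and maps both ways are isomorphic -/
noncomputable def isoOfHoms {S T : Over X} [Mono S.hom] [Mono T.hom]
    (f : S ⟶ T) (g : T ⟶ S) : S ≅ T where
  hom := f
  inv := g
  hom_inv_id := by
    ext
    have : (f.left ≫ g.left) ≫ S.hom = 𝟙 _ ≫ S.hom := by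
      rw [Category.assoc, Over.w, Over.w, Category.id_comp]
    simpa using (cancel_mono S.hom).mp this
  inv_hom_id := by
    ext
    have : (g.left ≫ f.left) ≫ T.hom = 𝟙 _ ≫ T.hom := by
      rw [Category.assoc, Over.w, Over.w, Category.id_comp]
    simpa using (cancel_mono T.hom).mp this

end lemmas

section main
set_option linter.unusedSectionVars false
variable [HasStrictInitialObjects C] {X : C}

theorem main_le1 (S T : Over X) :
    Nonempty (meetO (negO (negO S)) (negO (negO T)) ⟶ negO (negO (meetO S T))) := by
  set M := meetO S T
  set n := negO M
  have h1 : Nonempty (meetO S n ⟶ negO T) := by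
    apply hom_neg_of_disj
    apply disj_symm
    have hmn : Disj M n := disj_self_neg M
    obtain ⟨q⟩ := hmn
    refine ⟨?_⟩
    have f1 : meetO (meetO S n) T ⟶ meetO M n :=
      meetLift (meetLift (meetFst _ _ ≫ meetFst _ _) (meetSnd _ _))
        (meetFst _ _ ≫ meetSnd _ _)
    exact f1.left ≫ q
  obtain ⟨f1⟩ := h1
  have h3 : Disj (meetO S n) (negO (negO T)) :=
    disj_of_le f1 (disj_self_neg (negO T))
  have h4 : Nonempty (meetO n (negO (negO T)) ⟶ negO S) := by
    apply hom_neg_of_disj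
    apply disj_symm
    obtain ⟨q⟩ := h3
    refine ⟨?_⟩
    have f2 : meetO (meetO n (negO (negO T))) S ⟶ meetO (meetO S n) (negO (negO T)) :=
      meetLift (meetLift (meetSnd _ _) (meetFst _ _ ≫ meetFst _ _))
        (meetFst _ _ ≫ meetSnd _ _)
    exact f2.left ≫ q
  obtain ⟨f4⟩ := h4
  have h6 : Disj (meetO n (negO (negO T))) (negO (negO S)) :=
    disj_of_le f4 (disj_self_neg (negO S))
  apply hom_neg_of_disj
  obtain ⟨q⟩ := h6
  refine ⟨?_⟩
  have f7 : meetO n (meetO (negO (negO S)) (negO (negO T))) ⟶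
      meetO (meetO n (negO (negO T))) (negO (negO S)) :=
    meetLift (meetLift (meetFst _ _) (meetSnd _ _ ≫ meetSnd _ _))
      (meetSnd _ _ ≫ meetFst _ _)
  exact f7.left ≫ q

theorem main_le2 (S T : Over X) :
    Nonempty (negO (negO (meetO S T)) ⟶ meetO (negO (negO S)) (negO (negO T))) := by
  obtain ⟨gS⟩ := negAntitone (meetFst S T)
  obtain ⟨gT⟩ := negAntitone (meetSnd S T)
  obtain ⟨hS⟩ := negAntitone gS
  obtain ⟨hT⟩ := negAntitone gT
  exact ⟨meetLift hS hT⟩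

end main

/-- In a locally cartesian closed category with a strict initial object, the double
negation closure of subobjects of `X` commutes with intersection:
`Ā ∩ B̄ ≅ (A ∩ B)‾` as subobjects of `X` (intersections given by pullback over `X`). -/
theorem closure_intersection [HasStrictInitialObjects C]
    {A B X : C} (a : A ⟶ X) (b : B ⟶ X) [Mono a] [Mono b] :
    Nonempty
      ((Over.mk (pullback.fst (nneg a).hom (nneg b).hom ≫ (nneg a).hom) : Over X) ≅
        nneg (pullback.fst a b ≫ a)) := by
  let S : Over X := Over.mk a
  let T : Over X := Over.mk b
  obtain ⟨f⟩ := main_le1 S T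
  obtain ⟨g⟩ := main_le2 S T
  haveI h1 : Mono (negO (negO S)).hom := neg_hom_mono_s10 _
  haveI h2 : Mono (negO (negO T)).hom := neg_hom_mono_s10 _
  haveI hL : Mono (meetO (negO (negO S)) (negO (negO T))).hom := meet_hom_mono
  haveI hR : Mono (negO (negO (meetO S T))).hom := neg_hom_mono_s10 _
  have e : meetO (negO (negO S)) (negO (negO T)) ≅ negO (negO (meetO S T)) := isoOfHoms f g
  exact ⟨e⟩
end

section
/- Let E be a locally cartesian closed category with disjoint finite coproducts. For any monomorphism A → X, the decidability map A + ¬A → X (induced by the inclusion A → X and the negation ¬A → X) is a monomorphism. -/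
open CategoryTheory CategoryTheory.Limits

universe v u

variable {C : Type u} [Category.{v} C] [HasPullbacks C] [LCC C] [HasInitial C]

section Aux

/-- `Over.mk (initial.to B)` is initial in `Over B`. -/
noncomputable def overInitialIsInitial (B : C) : IsInitial (Over.mk (initial.to B)) :=
  IsInitial.ofUniqueHom (fun g => Over.homMk (initial.to g.left) (initial.hom_ext _ _))
    (fun g m => by ext; exact initial.hom_ext _ _)

/-- In an LCC category with initial object, the initial object is strict. -/
noncomputable def strictInitial {Y : C} (t : Y ⟶ ⊥_ C) : IsInitial Y := by
  haveI := (LCC.adj t).leftAdjoint_preservesColimits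
  have h2 : IsInitial (pullback (initial.to (⊥_ C)) t) :=
    (((overInitialIsInitial (⊥_ C)).isInitialObj (Over.pullback t)
      (Over.mk (initial.to (⊥_ C)))).isInitialObj (Over.forget Y) _)
  have comm : t ≫ initial.to (⊥_ C) = 𝟙 Y ≫ t := by
    rw [initial.hom_ext (initial.to (⊥_ C)) (𝟙 _)]; simp
  exact h2.ofIso
    (Iso.mk (pullback.snd _ _) (pullback.lift t (𝟙 Y) comm) (h2.hom_ext _ _) (by simp [pullback.lift_snd]))

/-- If `W` admits maps to both `A` and `¬A` compatible over `X`, then `W` is initial: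
`A ∩ ¬A = 0`. -/
noncomputable def negDisjointAux {A X W : C} (a : A ⟶ X) (s' : W ⟶ A) (s : W ⟶ (neg a).left)
    (h : s' ≫ a = s ≫ (neg a).hom) : IsInitial W := by
  have hu : Over.mk (s' ≫ a) ⟶ (LCC.Pi a).obj (Over.mk (initial.to A)) :=
    Over.homMk s h.symm
  have fu := ((LCC.adj a).homEquiv (Over.mk (s' ≫ a)) (Over.mk (initial.to A))).symm hu
  exact strictInitial (pullback.lift (𝟙 W) s' (by simp) ≫ fu.left)

/-- The negation of any map is a monomorphism. -/
lemma neg_hom_mono_s12 {A X : C} (a : A ⟶ X) : Mono (neg a).hom := by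
  constructor
  intro T u v huv
  let hu : Over.mk (u ≫ (neg a).hom) ⟶ (LCC.Pi a).obj (Over.mk (initial.to A)) :=
    Over.homMk u rfl
  let hv : Over.mk (u ≫ (neg a).hom) ⟶ (LCC.Pi a).obj (Over.mk (initial.to A)) :=
    Over.homMk v huv.symm
  have hQ : IsInitial ((Over.pullback a).obj (Over.mk (u ≫ (neg a).hom))).left :=
    strictInitial
      ((((LCC.adj a).homEquiv (Over.mk (u ≫ (neg a).hom)) (Over.mk (initial.to A))).symm hu).left)
  have heq : ((LCC.adj a).homEquiv _ _).symm hu = ((LCC.adj a).homEquiv _ _).symm hv := by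
    ext
    exact hQ.hom_ext _ _
  have h2 : hu = hv := (Equiv.injective _) heq
  have h3 := congrArg CommaMorphism.left h2
  exact h3

/-- The coproduct cofan, regarded in the slice over `A ⨿ B`, is a colimit. -/
noncomputable def overCoprodCofanIsColimit (Y Z : C) [HasBinaryCoproduct Y Z] :
    IsColimit (BinaryCofan.mk
      (Over.homMk (coprod.inl : Y ⟶ Y ⨿ Z) : Over.mk (coprod.inl : Y ⟶ Y ⨿ Z) ⟶ Over.mk (𝟙 (Y ⨿ Z)))
      (Over.homMk (coprod.inr : Z ⟶ Y ⨿ Z) : Over.mk (coprod.inr : Z ⟶ Y ⨿ Z) ⟶ Over.mk (𝟙 (Y ⨿ Z)))) :=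
  BinaryCofan.isColimitMk
    (fun s => Over.homMk (coprod.desc (show Y ⟶ s.pt.left from s.inl.left)
        (show Z ⟶ s.pt.left from s.inr.left))
      (by apply coprod.hom_ext
          · simpa [coprod.inl_desc] using Over.w s.inl
          · simpa [coprod.inr_desc] using Over.w s.inr))
    (fun s => by ext; simp [coprod.inl_desc, coprod.inr_desc, coprod.inl_desc_assoc, coprod.inr_desc_assoc])
    (fun s => by ext; simp [coprod.inl_desc, coprod.inr_desc, coprod.inl_desc_assoc, coprod.inr_desc_assoc])
    (fun s m h1 h2 => by
      ext
      apply coprod.hom_ext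
      · simpa [coprod.inl_desc] using congrArg CommaMorphism.left h1
      · simpa [coprod.inr_desc] using congrArg CommaMorphism.left h2)

/-- Coproducts are stable under pullback in an LCC category: pulling back the
coproduct injections along `f : T ⟶ Y ⨿ Z` decomposes `T` as a coproduct. -/
noncomputable def pullbackCofanIsColimit {Y Z T : C} [HasFiniteCoproducts C] (f : T ⟶ Y ⨿ Z) :
    IsColimit (BinaryCofan.mk
      (pullback.snd (coprod.inl : Y ⟶ Y ⨿ Z) f)
      (pullback.snd (coprod.inr : Z ⟶ Y ⨿ Z) f)) := by
  haveI := (LCC.adj f).leftAdjoint_preservesColimits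
  have l1 := mapIsColimitOfPreservesOfIsColimit (Over.pullback f) _ _
    (overCoprodCofanIsColimit Y Z)
  have l2 := mapIsColimitOfPreservesOfIsColimit (Over.forget T) _ _ l1
  refine IsColimit.ofIsoColimit l2 (Cocones.ext (@asIso _ _ (pullback (𝟙 (Y ⨿ Z)) f) T
    (pullback.snd (𝟙 (Y ⨿ Z)) f) inferInstance) ?_)
  rintro ⟨⟨⟩⟩ <;> · dsimp [Over.pullback]; exact pullback.lift_snd _ _ _

lemma desc_eq_auxl {A X : C} [HasFiniteCoproducts C] (a : A ⟶ X) [Mono a] {T : C}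
    (u v : T ⟶ A ⨿ (neg a).left)
    (h : u ≫ coprod.desc a (neg a).hom = v ≫ coprod.desc a (neg a).hom)
    {W : C} (w : W ⟶ T) (p : W ⟶ A) (hp : w ≫ u = p ≫ coprod.inl) :
    w ≫ u = w ≫ v := by
  have hc := pullbackCofanIsColimit (w ≫ v)
  refine hc.hom_ext ?_
  rintro ⟨⟨⟩⟩ <;>
    simp only [BinaryCofan.mk_pt, BinaryCofan.ι_app_left, BinaryCofan.ι_app_right,
      BinaryCofan.mk_inl, BinaryCofan.mk_inr]
  · -- on `(w ≫ v)⁻¹(A)` both maps land in `A`, and `a` is mono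
    set e := pullback.snd (coprod.inl : A ⟶ A ⨿ (neg a).left) (w ≫ v) with he
    have hcond : pullback.fst (coprod.inl : A ⟶ A ⨿ (neg a).left) (w ≫ v) ≫ coprod.inl
        = e ≫ (w ≫ v) := pullback.condition
    have hpa : (e ≫ p) ≫ a = pullback.fst (coprod.inl : A ⟶ A ⨿ (neg a).left) (w ≫ v) ≫ a := by
      have h1 : e ≫ w ≫ u ≫ coprod.desc a (neg a).hom
          = e ≫ w ≫ v ≫ coprod.desc a (neg a).hom := by rw [h]
      calc (e ≫ p) ≫ a = e ≫ (w ≫ u) ≫ coprod.desc a (neg a).hom := by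
            rw [hp] <;> simp [coprod.inl_desc, coprod.inr_desc, coprod.inl_desc_assoc, coprod.inr_desc_assoc]
        _ = e ≫ (w ≫ v) ≫ coprod.desc a (neg a).hom := by
            simpa using h1
        _ = pullback.fst (coprod.inl : A ⟶ A ⨿ (neg a).left) (w ≫ v) ≫ a := by
            rw [← Category.assoc, ← hcond] <;> simp [coprod.inl_desc, coprod.inr_desc, coprod.inl_desc_assoc, coprod.inr_desc_assoc]
    have hep : e ≫ p = pullback.fst _ _ := by
      rw [← cancel_mono a, hpa]
    calc e ≫ w ≫ u = (e ≫ p) ≫ coprod.inl := by rw [Category.assoc, hp] <;> simp [coprod.inl_desc, coprod.inr_desc, coprod.inl_desc_assoc, coprod.inr_desc_assoc]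
      _ = pullback.fst _ _ ≫ coprod.inl := by rw [hep]
      _ = e ≫ w ≫ v := by rw [hcond] <;> simp [coprod.inl_desc, coprod.inr_desc, coprod.inl_desc_assoc, coprod.inr_desc_assoc]
  · -- on `(w ≫ v)⁻¹(¬A)` the source is initial
    set e := pullback.snd (coprod.inr : (neg a).left ⟶ A ⨿ (neg a).left) (w ≫ v) with he
    have hcond : pullback.fst (coprod.inr : (neg a).left ⟶ A ⨿ (neg a).left) (w ≫ v) ≫ coprod.inr
        = e ≫ (w ≫ v) := pullback.condition
    have hin : (e ≫ p) ≫ a = pullback.fst _ _ ≫ (neg a).hom := by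
      have h1 : e ≫ w ≫ u ≫ coprod.desc a (neg a).hom
          = e ≫ w ≫ v ≫ coprod.desc a (neg a).hom := by rw [h]
      calc (e ≫ p) ≫ a = e ≫ (w ≫ u) ≫ coprod.desc a (neg a).hom := by
            rw [hp] <;> simp [coprod.inl_desc, coprod.inr_desc, coprod.inl_desc_assoc, coprod.inr_desc_assoc]
        _ = e ≫ (w ≫ v) ≫ coprod.desc a (neg a).hom := by simpa using h1
        _ = pullback.fst _ _ ≫ (neg a).hom := by
            rw [← Category.assoc, ← hcond] <;> simp [coprod.inl_desc, coprod.inr_desc, coprod.inl_desc_assoc, coprod.inr_desc_assoc]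
    exact (negDisjointAux a (e ≫ p) (pullback.fst _ _) hin).hom_ext _ _

lemma desc_eq_auxr {A X : C} [HasFiniteCoproducts C] (a : A ⟶ X) [Mono a] {T : C}
    (u v : T ⟶ A ⨿ (neg a).left)
    (h : u ≫ coprod.desc a (neg a).hom = v ≫ coprod.desc a (neg a).hom)
    {W : C} (w : W ⟶ T) (q : W ⟶ (neg a).left) (hq : w ≫ u = q ≫ coprod.inr) :
    w ≫ u = w ≫ v := by
  haveI : Mono (neg a).hom := neg_hom_mono_s12 a
  have hc := pullbackCofanIsColimit (w ≫ v)
  refine hc.hom_ext ?_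
  rintro ⟨⟨⟩⟩ <;>
    simp only [BinaryCofan.mk_pt, BinaryCofan.ι_app_left, BinaryCofan.ι_app_right,
      BinaryCofan.mk_inl, BinaryCofan.mk_inr]
  · -- the source is initial
    set e := pullback.snd (coprod.inl : A ⟶ A ⨿ (neg a).left) (w ≫ v) with he
    have hcond : pullback.fst (coprod.inl : A ⟶ A ⨿ (neg a).left) (w ≫ v) ≫ coprod.inl
        = e ≫ (w ≫ v) := pullback.condition
    have hin : pullback.fst _ _ ≫ a = (e ≫ q) ≫ (neg a).hom := by
      have h1 : e ≫ w ≫ u ≫ coprod.desc a (neg a).hom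
          = e ≫ w ≫ v ≫ coprod.desc a (neg a).hom := by rw [h]
      calc pullback.fst _ _ ≫ a
          = e ≫ (w ≫ v) ≫ coprod.desc a (neg a).hom := by
            rw [← Category.assoc, ← hcond] <;> simp [coprod.inl_desc, coprod.inr_desc, coprod.inl_desc_assoc, coprod.inr_desc_assoc]
        _ = e ≫ (w ≫ u) ≫ coprod.desc a (neg a).hom := by simpa using h1.symm
        _ = (e ≫ q) ≫ (neg a).hom := by rw [hq] <;> simp [coprod.inl_desc, coprod.inr_desc, coprod.inl_desc_assoc, coprod.inr_desc_assoc]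
    exact (negDisjointAux a (pullback.fst _ _) (e ≫ q) hin).hom_ext _ _
  · -- both maps land in `¬A`, which is mono
    set e := pullback.snd (coprod.inr : (neg a).left ⟶ A ⨿ (neg a).left) (w ≫ v) with he
    have hcond : pullback.fst (coprod.inr : (neg a).left ⟶ A ⨿ (neg a).left) (w ≫ v) ≫ coprod.inr
        = e ≫ (w ≫ v) := pullback.condition
    have hqn : (e ≫ q) ≫ (neg a).hom = pullback.fst _ _ ≫ (neg a).hom := by
      have h1 : e ≫ w ≫ u ≫ coprod.desc a (neg a).hom
          = e ≫ w ≫ v ≫ coprod.desc a (neg a).hom := by rw [h]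
      calc (e ≫ q) ≫ (neg a).hom
          = e ≫ (w ≫ u) ≫ coprod.desc a (neg a).hom := by rw [hq] <;> simp [coprod.inl_desc, coprod.inr_desc, coprod.inl_desc_assoc, coprod.inr_desc_assoc]
        _ = e ≫ (w ≫ v) ≫ coprod.desc a (neg a).hom := by simpa using h1
        _ = pullback.fst _ _ ≫ (neg a).hom := by rw [← Category.assoc, ← hcond] <;> simp [coprod.inl_desc, coprod.inr_desc, coprod.inl_desc_assoc, coprod.inr_desc_assoc]
    have heq : e ≫ q = pullback.fst _ _ := by
      rw [← cancel_mono (neg a).hom, hqn]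
    calc e ≫ w ≫ u = (e ≫ q) ≫ coprod.inr := by rw [Category.assoc, hq] <;> simp [coprod.inl_desc, coprod.inr_desc, coprod.inl_desc_assoc, coprod.inr_desc_assoc]
      _ = pullback.fst _ _ ≫ coprod.inr := by rw [heq]
      _ = e ≫ w ≫ v := by rw [hcond] <;> simp [coprod.inl_desc, coprod.inr_desc, coprod.inl_desc_assoc, coprod.inr_desc_assoc]

end Aux

/-- In a locally cartesian closed category with disjoint finite coproducts, for any
monomorphism `a : A ⟶ X` the decidability map `A + ¬A ⟶ X` is a monomorphism. -/
theorem decidability_map_mono [HasFiniteCoproducts C] [BinaryCoproductsDisjoint C]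
    {A X : C} (a : A ⟶ X) [Mono a] :
    Mono (coprod.desc a (neg a).hom : A ⨿ (neg a).left ⟶ X) := by
  constructor
  intro T u v h
  have hc := pullbackCofanIsColimit u
  refine hc.hom_ext ?_
  rintro ⟨⟨⟩⟩ <;>
    simp only [BinaryCofan.mk_pt, BinaryCofan.ι_app_left, BinaryCofan.ι_app_right,
      BinaryCofan.mk_inl, BinaryCofan.mk_inr]
  · exact desc_eq_auxl a u v h _ (pullback.fst _ _) pullback.condition.symm
  · exact desc_eq_auxr a u v h _ (pullback.fst _ _) pullback.condition.symm
end

section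
/- Let E be a locally cartesian closed category with a strict initial object. If a composite g∘f and g are both dense monomorphisms, then f is a dense monomorphism. -/
/-! A mono `g` does not change which maps into `B` are disjoint from `f`: pulling `¬f ≫ g`
back along `f ≫ g` gives the same object as pulling `¬f` back along `f`, which is initial.
So `¬f ≫ g` factors through `¬(f ≫ g)`, whose domain is initial, and strictness of the initial
object makes the domain of `¬f` initial as well. -/

open CategoryTheory CategoryTheory.Limits

universe v u

variable {C : Type u} [Category.{v} C] [HasPullbacks C] [LCC C] [HasInitial C]

/-- A dense monomorphism: a mono whose negation has initial domain. -/
def IsDenseMono {A B : C} (f : A ⟶ B) : Prop :=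
  Mono f ∧ Nonempty (IsInitial ((neg f).left))

noncomputable def pullbackNegIsInitial [HasStrictInitialObjects C] {E B : C} (p : E ⟶ B) :
    IsInitial (pullback (neg p).hom p) :=
  IsInitial.ofStrict ((LCC.adj p).counit.app (Over.mk (initial.to E))).left initialIsInitial

noncomputable def toNegOfIsInitial {E B : C} {p : E ⟶ B} (X : Over B)
    (h : IsInitial (pullback X.hom p)) : X ⟶ neg p :=
  (LCC.adj p).homEquiv _ _ (Over.homMk (h.to _) (h.hom_ext _ _))

noncomputable def negLeftIsInitialOfCompMono [HasStrictInitialObjects C] {E B D : C} (p : E ⟶ B)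
    (g : B ⟶ D) [Mono g] (h : IsInitial (neg (p ≫ g)).left) : IsInitial (neg p).left :=
  have disjoint : IsInitial (pullback ((neg p).hom ≫ g) (p ≫ g)) :=
    (pullbackNegIsInitial p).ofStrict
      ((limit.isLimit _).conePointUniqueUpToIso (pullbackIsPullbackOfCompMono _ p g)).hom
  h.ofStrict (toNegOfIsInitial (Over.mk ((neg p).hom ≫ g)) disjoint).left

/-- In a locally cartesian closed category with a strict initial object, if `f ≫ g` and
`g` are dense monomorphisms then so is `f`. -/
theorem denseMono_of_comp [HasStrictInitialObjects C]
    {A B D : C} (f : A ⟶ B) (g : B ⟶ D)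
    (hfg : IsDenseMono (f ≫ g)) (hg : IsDenseMono g) : IsDenseMono f := by
  have := hfg.1
  have := hg.1
  exact ⟨mono_of_mono f g, ⟨negLeftIsInitialOfCompMono f g hfg.2.some⟩⟩
end

section
/- Let E be a locally cartesian closed category with a strict initial object. The class W of dense monomorphisms admits a calculus of right fractions; in particular W contains identities, is closed under composition, is stable under pullback, and satisfies the right Ore and right cancellability conditions needed for the localization E[W⁻¹] to be described by spans (w, f) with w ∈ W. -/
/-!
Call `f : E ⟶ B` dense when every `a : A ⟶ B` whose pullback along `f` is initial has initial
source. Under `Over.pullback f ⊣ Π_f`, maps `A ⟶ ¬f` over `B` correspond to maps `a : A ⟶ B`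
with a map from the pullback of `a` along `f` into `0`; as `0` is strict, `¬f` has initial domain
exactly when `f` is dense. Density is visibly closed under identities, composition and base
change, and so are monomorphisms. Any such class of monomorphisms admits a calculus of right
fractions: the Ore condition is solved by pullback and the cancellation condition is trivial.
-/

open CategoryTheory CategoryTheory.Limits

universe v u

variable {C : Type u} [Category.{v} C] [HasPullbacks C] [LCC C] [HasInitial C]

/-- The class of dense monomorphisms: monos whose negation has initial domain. -/
def denseMonos : MorphismProperty C :=
  fun _ _ f => Mono f ∧ Nonempty (IsInitial ((neg f).left))

namespace CategoryTheory.MorphismProperty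

lemma hasRightCalculusOfFractions_of_le_monomorphisms {D : Type*} [Category D] [HasPullbacks D]
    (W : MorphismProperty D) [W.IsMultiplicative] [W.IsStableUnderBaseChange]
    (hW : W ≤ monomorphisms D) : W.HasRightCalculusOfFractions where
  exists_rightFraction _ _ φ :=
    ⟨⟨pullback.fst φ.f φ.s,
      IsStableUnderBaseChange.of_isPullback (IsPullback.of_hasPullback φ.f φ.s).flip φ.hs,
      pullback.snd φ.f φ.s⟩, pullback.condition⟩
  ext X _ _ f₁ f₂ s hs h := by
    have : Mono s := hW s hs
    exact ⟨X, 𝟙 X, W.id_mem X, by rw [cancel_mono s |>.1 h]⟩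

end CategoryTheory.MorphismProperty

section DenseMorphisms

variable {D : Type*} [Category D] [HasPullbacks D]

def denseMorphisms : MorphismProperty D := fun _ B f =>
  ∀ ⦃A : D⦄ (a : A ⟶ B), Nonempty (IsInitial (pullback a f)) → Nonempty (IsInitial A)

variable [HasStrictInitialObjects D]

instance denseMorphisms.isMultiplicative : (denseMorphisms (D := D)).IsMultiplicative where
  id_mem B A a := fun ⟨hp⟩ => ⟨.ofStrict (pullback.lift (𝟙 A) a (by simp)) hp⟩
  comp_mem f g hf hg A a := fun ⟨hp⟩ => by
    refine hg a (hf (pullback.snd a g) ⟨.ofStrict ?_ hp⟩)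
    exact pullback.lift (pullback.fst _ _ ≫ pullback.fst a g) (pullback.snd _ _)
      (by simp [pullback.condition, pullback.condition_assoc])

instance denseMorphisms.isStableUnderBaseChange :
    (denseMorphisms (D := D)).IsStableUnderBaseChange where
  of_isPullback {_ _ _ _ f g _ g'} sq hg A a := fun ⟨hp⟩ => by
    refine hg (a ≫ f) ⟨.ofStrict ?_ hp⟩
    have w : pullback.snd (a ≫ f) g ≫ g = (pullback.fst (a ≫ f) g ≫ a) ≫ f := by
      rw [Category.assoc, pullback.condition]
    exact pullback.lift (pullback.fst _ _) (sq.lift _ _ w) (sq.lift_snd _ _ w).symm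

end DenseMorphisms

section Negation

variable [HasStrictInitialObjects C]

lemma nonempty_isInitial_neg_left_iff {E B : C} (f : E ⟶ B) :
    Nonempty (IsInitial (neg f).left) ↔ denseMorphisms f := by
  constructor
  · rintro ⟨h⟩ A a ⟨hp⟩
    let φ : (Over.pullback f).obj (Over.mk a) ⟶ Over.mk (initial.to E) :=
      Over.homMk (hp.to (⊥_ C)) (hp.hom_ext _ _)
    exact ⟨.ofStrict ((LCC.adj f).homEquiv _ _ φ).left h⟩
  · intro hf
    exact hf (neg f).hom ⟨.ofStrict ((LCC.adj f).counit.app _).left initialIsInitial⟩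

lemma denseMonos_eq_inf :
    denseMonos (C := C) = MorphismProperty.monomorphisms C ⊓ denseMorphisms := by
  ext _ _ f
  exact and_congr Iff.rfl (nonempty_isInitial_neg_left_iff f)

end Negation

/-- In a locally cartesian closed category with a strict initial object, the class `W` of
dense monomorphisms admits a calculus of right fractions (in particular it contains
identities, is closed under composition, and satisfies the right Ore and right
cancellability conditions), and is stable under pullback. -/
theorem denseMonos_calculus_of_right_fractions [HasStrictInitialObjects C] :
    (denseMonos (C := C)).HasRightCalculusOfFractions ∧
      (∀ {P A Y B : C} (k : P ⟶ A) (d' : P ⟶ Y) (d : A ⟶ B) (g : Y ⟶ B),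
        IsPullback k d' d g → denseMonos d → denseMonos d') := by
  rw [denseMonos_eq_inf]
  exact ⟨MorphismProperty.hasRightCalculusOfFractions_of_le_monomorphisms _ inf_le_left,
    fun _ _ _ _ sq hd => MorphismProperty.IsStableUnderBaseChange.of_isPullback sq hd⟩
end

section
/- Let E be a locally cartesian closed category with disjoint finite coproducts, and let p : E → B with diagonal δ_p : E → E×_B E. For each i ≠ j the pullback in E×_B E of the i-th and j-th copies of the 'shifted' diagonal maps δ_i, δ_j : E⊠_B E → (E⊠_B E)×_B E (given on elements by (a,b) ↦ (a,b,a) and (a,b) ↦ (a,b,b)) is initial, and consequently the induced map 2·(E⊠_B E) → (E⊠_B E)×_B E is a monomorphism. -/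
open CategoryTheory CategoryTheory.Limits

universe v u

variable {C : Type u} [Category.{v} C] [HasPullbacks C] [LCC C] [HasInitial C]

variable [HasFiniteCoproducts C] [BinaryCoproductsDisjoint C]

/-- The object of distinct pairs `E ⊠_B E`: the domain of the negation of the
diagonal `δ_p : E ⟶ E ×_B E`. -/
noncomputable def distinctPairs {E B : C} (p : E ⟶ B) : C :=
  (neg (pullback.diagonal p)).left

/-- The structure map `E ⊠_B E ⟶ E ×_B E`. -/
noncomputable def distinctPairsHom {E B : C} (p : E ⟶ B) :
    distinctPairs p ⟶ pullback p p :=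
  (neg (pullback.diagonal p)).hom

/-- The base map `E ⊠_B E ⟶ B`. -/
noncomputable def distinctPairsBase {E B : C} (p : E ⟶ B) : distinctPairs p ⟶ B :=
  distinctPairsHom p ≫ pullback.fst p p ≫ p

/-- The first shifted diagonal `(a,b) ↦ (a,b,a) : E ⊠_B E ⟶ (E ⊠_B E) ×_B E`. -/
noncomputable def shiftedDiag₁ {E B : C} (p : E ⟶ B) :
    distinctPairs p ⟶ pullback (distinctPairsBase p) p :=
  pullback.lift (𝟙 _) (distinctPairsHom p ≫ pullback.fst p p)
    (by simp [distinctPairsBase])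

/-- The second shifted diagonal `(a,b) ↦ (a,b,b) : E ⊠_B E ⟶ (E ⊠_B E) ×_B E`. -/
noncomputable def shiftedDiag₂ {E B : C} (p : E ⟶ B) :
    distinctPairs p ⟶ pullback (distinctPairsBase p) p :=
  pullback.lift (𝟙 _) (distinctPairsHom p ≫ pullback.snd p p)
    (by simp [distinctPairsBase, pullback.condition])

/-- The initial object of `Over X` is `⊥_C` with its unique map to `X`. -/
noncomputable def overInitial (X : C) : IsInitial (Over.mk (initial.to X)) :=
  IsInitial.ofUniqueHom (fun d => Over.homMk (initial.to d.left) (initial.hom_ext _ _))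
    (fun d m => by
      ext
      exact initial.hom_ext _ _)

/-- LCC categories with an initial object have strict initial objects. -/
theorem lcc_strict_initial : HasStrictInitialObjects C := by
  apply hasStrictInitialObjects_of_initial_is_strict
  intro A f
  haveI : PreservesColimitsOfSize.{0, 0} (Over.pullback f) :=
    (LCC.adj f).leftAdjoint_preservesColimits
  have h1 : IsInitial ((Over.pullback f).obj (Over.mk (initial.to (⊥_ C)))) :=
    (overInitial (⊥_ C)).isInitialObj (Over.pullback f) _
  -- the underlying object of this initial object is `pullback (initial.to ⊥) f`
  have hidfx : f ≫ initial.to (⊥_ C) = 𝟙 A ≫ f := by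
    rw [initial.hom_ext (initial.to (⊥_ C)) (𝟙 _), Category.comp_id, Category.id_comp]
  let L : A ⟶ pullback (initial.to (⊥_ C)) f := pullback.lift f (𝟙 A) hidfx
  let j : pullback (initial.to (⊥_ C)) f ⟶ ⊥_ C :=
    (h1.uniqueUpToIso (overInitial A)).hom.left
  have hj : j ≫ initial.to A = pullback.snd (initial.to (⊥_ C)) f :=
    Over.w (h1.uniqueUpToIso (overInitial A)).hom
  let g : A ⟶ ⊥_ C := L ≫ j
  have hg : g ≫ initial.to A = 𝟙 A := by
    simp only [g, Category.assoc, hj]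
    simp [L, pullback.lift_snd]
  have hf : f = g := by
    calc f = 𝟙 A ≫ f := (Category.id_comp f).symm
    _ = g ≫ initial.to A ≫ f := by rw [← hg, Category.assoc]
    _ = g ≫ 𝟙 (⊥_ C) := by rw [initial.hom_ext (initial.to A ≫ f) (𝟙 _)]
    _ = g := Category.comp_id g
  rw [hf]
  exact ⟨initial.to A, hg, initial.hom_ext _ _⟩

/-- The pullback of `¬q` and `q` is initial. -/
theorem isInitial_pullback_neg {X Y : C} (q : X ⟶ Y) :
    Nonempty (IsInitial (pullback (neg q).hom q)) := by
  haveI := lcc_strict_initial (C := C)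
  let c : pullback (neg q).hom q ⟶ ⊥_ C :=
    ((LCC.adj q).counit.app (Over.mk (initial.to X))).left
  exact ⟨initialIsInitial.ofIso (asIso c).symm⟩

/-- Any cone over the cospan of the two shifted diagonals has initial apex. -/
theorem coneShiftedDiagsIsInitial {E B : C} (p : E ⟶ B)
    (s : PullbackCone (shiftedDiag₁ p) (shiftedDiag₂ p)) : Nonempty (IsInitial s.pt) := by
  haveI := lcc_strict_initial (C := C)
  obtain ⟨hi⟩ := isInitial_pullback_neg (pullback.diagonal p)
  have e := s.condition
  have hfs : s.fst = s.snd := by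
    have := congrArg (fun k => k ≫ pullback.fst (distinctPairsBase p) p) e
    simpa [shiftedDiag₁, shiftedDiag₂, pullback.lift_fst] using this
  have hsnd : s.fst ≫ distinctPairsHom p ≫ pullback.fst p p
      = s.fst ≫ distinctPairsHom p ≫ pullback.snd p p := by
    have := congrArg (fun k => k ≫ pullback.snd (distinctPairsBase p) p) e
    simp only [Category.assoc] at this
    simp only [shiftedDiag₁, shiftedDiag₂, limit.lift_π_assoc] at this
    rw [← hfs] at this
    simpa [PullbackCone.mk_π_app, pullback.lift_snd] using this
  have hw : s.fst ≫ distinctPairsHom p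
      = (s.fst ≫ distinctPairsHom p ≫ pullback.fst p p) ≫ pullback.diagonal p := by
    apply pullback.hom_ext
    · simp
    · simpa using hsnd.symm
  let L : s.pt ⟶ pullback (neg (pullback.diagonal p)).hom (pullback.diagonal p) :=
    pullback.lift (s.fst) (s.fst ≫ distinctPairsHom p ≫ pullback.fst p p) hw
  exact ⟨initialIsInitial.ofIso (asIso (L ≫ hi.to (⊥_ C))).symm⟩

/-- Universality of binary coproducts in an LCC category: any map into a binary
coproduct exhibits its domain as a binary coproduct of "preimages". -/
theorem coprod_universal {Z W T : C} (u : T ⟶ Z ⨿ W) :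
    ∃ (P₁ P₂ : C) (t₁ : P₁ ⟶ T) (t₂ : P₂ ⟶ T) (r₁ : P₁ ⟶ Z) (r₂ : P₂ ⟶ W),
      t₁ ≫ u = r₁ ≫ coprod.inl ∧ t₂ ≫ u = r₂ ≫ coprod.inr ∧
        Nonempty (IsColimit (BinaryCofan.mk t₁ t₂)) := by
  classical
  let c : BinaryCofan Z W := BinaryCofan.mk coprod.inl coprod.inr
  have hc : IsColimit c := coprodIsCoprod Z W
  have hc1 : IsColimit c.toOver := Over.isColimitToOver hc
  haveI : PreservesColimitsOfSize.{0, 0} (Over.pullback u) :=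
    (LCC.adj u).leftAdjoint_preservesColimits
  have hc2 : IsColimit ((Over.pullback u).mapCocone c.toOver) :=
    @isColimitOfPreserves _ _ _ _ _ _ _ (Over.pullback u) _ hc1
      (PreservesColimitsOfShape.preservesColimit)
  let cc := (Over.forget T).mapCocone ((Over.pullback u).mapCocone c.toOver)
  have hc3 : IsColimit cc := isColimitOfPreserves _ hc2
  let e : pullback (𝟙 (Z ⨿ W)) u ≅ T := asIso (pullback.snd (𝟙 (Z ⨿ W)) u)
  let t₁ : pullback (coprod.inl : Z ⟶ Z ⨿ W) u ⟶ T :=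
    cc.ι.app ⟨WalkingPair.left⟩ ≫ e.hom
  let t₂ : pullback (coprod.inr : W ⟶ Z ⨿ W) u ⟶ T :=
    cc.ι.app ⟨WalkingPair.right⟩ ≫ e.hom
  have hefst : e.hom ≫ u = pullback.fst (𝟙 (Z ⨿ W)) u := by
    have := pullback.condition (f := 𝟙 (Z ⨿ W)) (g := u)
    simp only [Category.comp_id] at this
    exact this.symm
  have happ₁ : cc.ι.app ⟨WalkingPair.left⟩ ≫ pullback.fst (𝟙 (Z ⨿ W)) u
      = pullback.fst (coprod.inl : Z ⟶ Z ⨿ W) u ≫ coprod.inl := by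
    show ((Over.pullback u).map (c.toOver.ι.app ⟨WalkingPair.left⟩)).left
        ≫ pullback.fst (𝟙 (Z ⨿ W)) u = _
    simp [c, Over.pullback]
    exact pullback.lift_fst _ _ _
  have happ₂ : cc.ι.app ⟨WalkingPair.right⟩ ≫ pullback.fst (𝟙 (Z ⨿ W)) u
      = pullback.fst (coprod.inr : W ⟶ Z ⨿ W) u ≫ coprod.inr := by
    show ((Over.pullback u).map (c.toOver.ι.app ⟨WalkingPair.right⟩)).left
        ≫ pullback.fst (𝟙 (Z ⨿ W)) u = _
    simp [c, Over.pullback]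
    exact pullback.lift_fst _ _ _
  have h₁ : t₁ ≫ u = pullback.fst (coprod.inl : Z ⟶ Z ⨿ W) u ≫ coprod.inl := by
    simp only [t₁, Category.assoc, hefst]
    exact (Category.assoc _ _ _).trans
      ((congrArg (fun k => cc.ι.app ⟨WalkingPair.left⟩ ≫ k) hefst).trans happ₁)
  have h₂ : t₂ ≫ u = pullback.fst (coprod.inr : W ⟶ Z ⨿ W) u ≫ coprod.inr := by
    simp only [t₂, Category.assoc, hefst]
    exact (Category.assoc _ _ _).trans
      ((congrArg (fun k => cc.ι.app ⟨WalkingPair.right⟩ ≫ k) hefst).trans happ₂)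
  have hc4 : IsColimit (BinaryCofan.mk t₁ t₂) := by
    refine (IsColimit.equivOfNatIsoOfIso (diagramIsoPair _) cc (BinaryCofan.mk t₁ t₂)
      (Cocones.ext e ?_)) hc3
    rintro ⟨⟨⟩⟩ <;>
      · dsimp [diagramIsoPair]
        simp [t₁, t₂]
        exact congrArg (· ≫ e.hom) (Category.id_comp _)
  exact ⟨_, _, t₁, t₂, pullback.fst _ _, pullback.fst _ _, h₁, h₂, ⟨hc4⟩⟩

/-- In a locally cartesian closed category with disjoint finite coproducts, the pullback
of the two distinct shifted diagonal maps `E ⊠_B E ⟶ (E ⊠_B E) ×_B E` is initial, and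
consequently the induced map `2·(E ⊠_B E) ⟶ (E ⊠_B E) ×_B E` is a monomorphism. -/
theorem shifted_diagonals_disjoint_and_mono {E B : C} (p : E ⟶ B) :
    IsPullback (initial.to (distinctPairs p)) (initial.to (distinctPairs p))
        (shiftedDiag₁ p) (shiftedDiag₂ p) ∧
      Mono (coprod.desc (shiftedDiag₁ p) (shiftedDiag₂ p) :
        distinctPairs p ⨿ distinctPairs p ⟶ pullback (distinctPairsBase p) p) := by
  haveI := lcc_strict_initial (C := C)
  have comm : initial.to (distinctPairs p) ≫ shiftedDiag₁ p
      = initial.to (distinctPairs p) ≫ shiftedDiag₂ p := initial.hom_ext _ _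
  have key : ∀ s : PullbackCone (shiftedDiag₁ p) (shiftedDiag₂ p), IsInitial s.pt :=
    fun s => (coneShiftedDiagsIsInitial p s).some
  have part1 : IsPullback (initial.to (distinctPairs p)) (initial.to (distinctPairs p))
      (shiftedDiag₁ p) (shiftedDiag₂ p) := by
    apply IsPullback.of_isLimit (c := PullbackCone.mk _ _ comm)
    exact PullbackCone.IsLimit.mk comm
      (fun s => (key s).to (⊥_ C))
      (fun s => (key s).hom_ext _ _)
      (fun s => (key s).hom_ext _ _)
      (fun s m _ _ => (key s).hom_ext _ _)
  have split₁ : ∀ {X : C} (a b : X ⟶ distinctPairs p),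
      a ≫ shiftedDiag₁ p = b ≫ shiftedDiag₁ p → a = b := by
    intro X a b h
    have := congrArg (fun k => k ≫ pullback.fst (distinctPairsBase p) p) h
    simpa [shiftedDiag₁, pullback.lift_fst] using this
  have split₂ : ∀ {X : C} (a b : X ⟶ distinctPairs p),
      a ≫ shiftedDiag₂ p = b ≫ shiftedDiag₂ p → a = b := by
    intro X a b h
    have := congrArg (fun k => k ≫ pullback.fst (distinctPairsBase p) p) h
    simpa [shiftedDiag₂, pullback.lift_fst] using this
  set d : distinctPairs p ⨿ distinctPairs p ⟶ pullback (distinctPairsBase p) p :=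
    coprod.desc (shiftedDiag₁ p) (shiftedDiag₂ p) with hd
  refine ⟨part1, ⟨fun {T} a b hab => ?_⟩⟩
  obtain ⟨P₁, P₂, t₁, t₂, r₁, r₂, ha₁, ha₂, ⟨hT⟩⟩ := coprod_universal a
  apply hT.hom_ext
  rintro ⟨j⟩
  have main : ∀ {P : C} (t : P ⟶ T), (∃ r : P ⟶ distinctPairs p, t ≫ a = r ≫ coprod.inl) →
      t ≫ a = t ≫ b := by
    intro P t ⟨r, hr⟩
    obtain ⟨Q₁, Q₂, s₁, s₂, w₁, w₂, hb₁, hb₂, ⟨hP⟩⟩ := coprod_universal (t ≫ b)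
    apply hP.hom_ext
    rintro ⟨j'⟩
    rcases j' with _ | _
    · -- matching component: use that shiftedDiag₁ is (split) mono
      have e1 : (s₁ ≫ r) ≫ shiftedDiag₁ p = w₁ ≫ shiftedDiag₁ p := by
        calc (s₁ ≫ r) ≫ shiftedDiag₁ p = s₁ ≫ (r ≫ coprod.inl) ≫ d := by
              simp [hd, coprod.inl_desc, coprod.inr_desc]
          _ = s₁ ≫ (t ≫ a) ≫ d := by rw [← hr]
          _ = (s₁ ≫ t) ≫ a ≫ d := by simp
          _ = (s₁ ≫ t) ≫ b ≫ d := by rw [hab]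
          _ = (s₁ ≫ (t ≫ b)) ≫ d := by simp
          _ = (w₁ ≫ coprod.inl) ≫ d := by rw [hb₁]
          _ = w₁ ≫ shiftedDiag₁ p := by simp [hd, coprod.inl_desc, coprod.inr_desc]
      have e2 := split₁ _ _ e1
      show s₁ ≫ t ≫ a = s₁ ≫ t ≫ b
      calc s₁ ≫ t ≫ a = s₁ ≫ r ≫ coprod.inl := by rw [hr]
        _ = (s₁ ≫ r) ≫ coprod.inl := by rw [Category.assoc]
        _ = w₁ ≫ coprod.inl := by rw [e2]
        _ = s₁ ≫ t ≫ b := hb₁.symm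
    · -- mixed component: lands in the (initial) intersection
      have e1 : (s₂ ≫ r) ≫ shiftedDiag₁ p = w₂ ≫ shiftedDiag₂ p := by
        calc (s₂ ≫ r) ≫ shiftedDiag₁ p = s₂ ≫ (r ≫ coprod.inl) ≫ d := by
              simp [hd, coprod.inl_desc, coprod.inr_desc]
          _ = s₂ ≫ (t ≫ a) ≫ d := by rw [← hr]
          _ = (s₂ ≫ t) ≫ a ≫ d := by simp
          _ = (s₂ ≫ t) ≫ b ≫ d := by rw [hab]
          _ = (s₂ ≫ (t ≫ b)) ≫ d := by simp
          _ = (w₂ ≫ coprod.inr) ≫ d := by rw [hb₂]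
          _ = w₂ ≫ shiftedDiag₂ p := by simp [hd, coprod.inl_desc, coprod.inr_desc]
      have hinit := key (PullbackCone.mk _ _ e1)
      exact hinit.hom_ext _ _
  have main' : ∀ {P : C} (t : P ⟶ T), (∃ r : P ⟶ distinctPairs p, t ≫ a = r ≫ coprod.inr) →
      t ≫ a = t ≫ b := by
    intro P t ⟨r, hr⟩
    obtain ⟨Q₁, Q₂, s₁, s₂, w₁, w₂, hb₁, hb₂, ⟨hP⟩⟩ := coprod_universal (t ≫ b)
    apply hP.hom_ext
    rintro ⟨j'⟩
    rcases j' with _ | _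
    · -- mixed component: lands in the (initial) intersection
      have e1 : w₁ ≫ shiftedDiag₁ p = (s₁ ≫ r) ≫ shiftedDiag₂ p := by
        calc w₁ ≫ shiftedDiag₁ p = (w₁ ≫ coprod.inl) ≫ d := by simp [hd, coprod.inl_desc, coprod.inr_desc]
          _ = (s₁ ≫ (t ≫ b)) ≫ d := by rw [hb₁]
          _ = (s₁ ≫ t) ≫ b ≫ d := by simp
          _ = (s₁ ≫ t) ≫ a ≫ d := by rw [hab]
          _ = s₁ ≫ (t ≫ a) ≫ d := by simp
          _ = s₁ ≫ (r ≫ coprod.inr) ≫ d := by rw [hr]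
          _ = (s₁ ≫ r) ≫ shiftedDiag₂ p := by simp [hd, coprod.inl_desc, coprod.inr_desc]
      have hinit := key (PullbackCone.mk _ _ e1)
      exact hinit.hom_ext _ _
    · -- matching component: use that shiftedDiag₂ is (split) mono
      have e1 : (s₂ ≫ r) ≫ shiftedDiag₂ p = w₂ ≫ shiftedDiag₂ p := by
        calc (s₂ ≫ r) ≫ shiftedDiag₂ p = s₂ ≫ (r ≫ coprod.inr) ≫ d := by
              simp [hd, coprod.inl_desc, coprod.inr_desc]
          _ = s₂ ≫ (t ≫ a) ≫ d := by rw [← hr]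
          _ = (s₂ ≫ t) ≫ a ≫ d := by simp
          _ = (s₂ ≫ t) ≫ b ≫ d := by rw [hab]
          _ = (s₂ ≫ (t ≫ b)) ≫ d := by simp
          _ = (w₂ ≫ coprod.inr) ≫ d := by rw [hb₂]
          _ = w₂ ≫ shiftedDiag₂ p := by simp [hd, coprod.inl_desc, coprod.inr_desc]
      have e2 := split₂ _ _ e1
      show s₂ ≫ t ≫ a = s₂ ≫ t ≫ b
      calc s₂ ≫ t ≫ a = s₂ ≫ r ≫ coprod.inr := by rw [hr]
        _ = (s₂ ≫ r) ≫ coprod.inr := by rw [Category.assoc]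
        _ = w₂ ≫ coprod.inr := by rw [e2]
        _ = s₂ ≫ t ≫ b := hb₂.symm
  rcases j with _ | _
  · exact main t₁ ⟨r₁, ha₁⟩
  · exact main' t₂ ⟨r₂, ha₂⟩
end
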